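/- Exact loss change after learning task B: with fixed probes w^(A), w^(B) (w^(B) ≠ 0), Σ^(A) symmetric PSD, β^(A) ∈ range(Σ^(A)), v^(A) = (Σ^(A))†β^(A), v^(B) = (Σ^(B))†β^(B), α = (w^(A)·w^(B))/‖w^(B)‖², Φ_opt^(B) = w^(B)(v^(B))ᵀ/‖w^(B)‖², and L^(A)(Φ) = ½((Φᵀw^(A))ᵀΣ^(A)(Φᵀw^(A)) − 2(Φᵀw^(A))ᵀβ^(A) + 1), the increase in task-A loss relative to the task-A optimum equals ΔL^(A) = L^(A)(Φ_opt^(B)) − ½(1 − β^(A)ᵀ(Σ^(A))†β^(A)) = ½(αv^(B) − v^(A))ᵀ Σ^(A) (αv^(B) − v^(A)). -/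

import Mathlib

open Matrix Finset

/-- Exact loss-change after learning task B. With fixed probes `wA`, `wB ≠ 0`,
task-A feature second-moment matrix `SA` (symmetric PSD) with pseudoinverse `PA`
(symmetric, `PA SA PA = PA`, `SA (PA βA) = βA`, so `βA ∈ range SA`),
`vA = PA βA`, `vB = PB βB`, `α = (wA·wB)/‖wB‖²`,
`Φopt_B = wB vBᵀ/‖wB‖²` the minimal-Frobenius-norm task-B minimizer, and
`LA(Φ) = ½((ΦᵀwA)ᵀ SA (ΦᵀwA) − 2(ΦᵀwA)ᵀβA + 1)`, the increase in task-A loss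
relative to the task-A optimum `½(1 − βAᵀ PA βA)` equals
`½ (α vB − vA)ᵀ SA (α vB − vA)`. -/
theorem exact_loss_change_after_task_B {m n : ℕ}
    (wA wB : Fin m → ℝ) (hwB : wB ≠ 0)
    (SA PA SB PB : Matrix (Fin n) (Fin n) ℝ) (βA βB : Fin n → ℝ)
    (hSA : SA.PosSemidef)
    (hPAsym : PA.IsSymm)
    (hPASAPA : PA * SA * PA = PA)
    (hSAPAβA : SA.mulVec (PA.mulVec βA) = βA)
    (vA vB : Fin n → ℝ) (hvA : vA = PA.mulVec βA) (hvB : vB = PB.mulVec βB)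
    (α : ℝ) (hα : α = (wA ⬝ᵥ wB) / (wB ⬝ᵥ wB))
    (ΦoptB : Matrix (Fin m) (Fin n) ℝ)
    (hΦoptB : ΦoptB = (wB ⬝ᵥ wB)⁻¹ • Matrix.vecMulVec wB vB)
    (LA : Matrix (Fin m) (Fin n) ℝ → ℝ)
    (hLA : LA = fun Φ =>
      (1 / 2) * ((Φᵀ.mulVec wA) ⬝ᵥ SA.mulVec (Φᵀ.mulVec wA) -
        2 * ((Φᵀ.mulVec wA) ⬝ᵥ βA) + 1)) :
    LA ΦoptB - (1 / 2) * (1 - βA ⬝ᵥ PA.mulVec βA) =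
      (1 / 2) * ((α • vB - vA) ⬝ᵥ SA.mulVec (α • vB - vA)) := by
  have hm : wB ⬝ᵥ wB ≠ 0 := fun hm => hwB (by
    ext i
    exact mul_self_eq_zero.mp
      ((Finset.sum_eq_zero_iff_of_nonneg (fun j _ => mul_self_nonneg (wB j))).1 hm i
        (Finset.mem_univ i)))
  have hz : ΦoptBᵀ.mulVec wA = α • vB := by
    subst hΦoptB hα
    ext i
    simp only [Matrix.mulVec, dotProduct, Matrix.transpose_apply, Matrix.smul_apply,
      Matrix.vecMulVec_apply, smul_eq_mul, Pi.smul_apply]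
    rw [div_eq_mul_inv]
    rw [Finset.sum_congr rfl (fun x _ =>
      show (∑ j, wB j * wB j)⁻¹ * (wB x * vB i) * wA x =
        wA x * wB x * ((∑ j, wB j * wB j)⁻¹ * vB i) from by ring), ← Finset.sum_mul]
    ring
  have hSAT : SAᵀ = SA := by simpa [Matrix.IsSymm] using hSA.1
  have hsym : ∀ x y : Fin n → ℝ, x ⬝ᵥ SA.mulVec y = y ⬝ᵥ SA.mulVec x := by
    intro x y
    rw [Matrix.dotProduct_mulVec, ← Matrix.mulVec_transpose, hSAT, dotProduct_comm]
  have h1 : SA.mulVec vA = βA := by rw [hvA]; exact hSAPAβA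
  have h2 : vA ⬝ᵥ βA = βA ⬝ᵥ PA.mulVec βA := by
    rw [hvA, dotProduct_comm, Matrix.dotProduct_mulVec, ← Matrix.mulVec_transpose,
      hPAsym.eq, dotProduct_comm]
  have h3 : vA ⬝ᵥ SA.mulVec vA = βA ⬝ᵥ PA.mulVec βA := by rw [h1, h2]
  have h4 : vB ⬝ᵥ SA.mulVec vA = vB ⬝ᵥ βA := by rw [h1]
  have h5 : vA ⬝ᵥ SA.mulVec vB = vB ⬝ᵥ βA := by rw [hsym, h4]
  simp only [hLA, hz]
  simp only [Matrix.mulVec_sub, Matrix.mulVec_smul, dotProduct_sub,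
    sub_dotProduct, dotProduct_smul, smul_dotProduct, smul_eq_mul]
  rw [h3, h4, h5]
  ring
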